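/- Let A and B be n×n matrices over the nonnegative reals with λ > 0 and μ > 0, and suppose H(μ) > λ. Let V = {(f_A(x), f_B(x)) : x a positive vector}. Then the set of Pareto-minimal points of V equals the segment {(α, G(α)) : λ ≤ α ≤ H(μ)}, where a point p ∈ V is Pareto-minimal if there is no q ∈ V with q₁ ≤ p₁, q₂ ≤ p₂ and q ≠ p; moreover, for each such α, every positive vector of the form x = (α^{-1}A ⊕ G(α)^{-1}B)* ⊗ u with u positive attains the value (f_A(x), f_B(x)) ≤ (α, G(α)). -/

import Mathlib

open scoped NNReal

/-- Square matrices over the max-times semifield of nonnegative reals. -/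
abbrev TMat (n : ℕ) := Matrix (Fin n) (Fin n) ℝ≥0

/-- Tropical (max-times) matrix product. -/
noncomputable def tmul {n : ℕ} (A B : TMat n) : TMat n :=
  fun i j => Finset.univ.sup fun k => A i k * B k j

/-- Tropical (max-times) matrix-vector product. -/
noncomputable def tmulVec {n : ℕ} (A : TMat n) (x : Fin n → ℝ≥0) : Fin n → ℝ≥0 :=
  fun i => Finset.univ.sup fun j => A i j * x j

/-- Tropical identity matrix. -/
noncomputable def tId (n : ℕ) : TMat n := fun i j => if i = j then 1 else 0

/-- Tropical matrix powers. -/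
noncomputable def tpow {n : ℕ} (A : TMat n) : ℕ → TMat n
  | 0 => tId n
  | k + 1 => tmul A (tpow A k)

/-- Tropical (entrywise max) matrix addition. -/
noncomputable def tadd {n : ℕ} (A B : TMat n) : TMat n := fun i j => A i j ⊔ B i j

/-- Entrywise scalar multiplication. -/
noncomputable def tsmul {n : ℕ} (a : ℝ≥0) (A : TMat n) : TMat n := fun i j => a * A i j

/-- Tropical trace: tr A = max_i a_{ii}. -/
noncomputable def ttr {n : ℕ} (A : TMat n) : ℝ≥0 := Finset.univ.sup fun i => A i i

/-- Tropical "determinant": Tr(A) = max_{k=1..n} tr(A^k). -/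
noncomputable def tTr {n : ℕ} (A : TMat n) : ℝ≥0 :=
  (Finset.Icc 1 n).sup fun k => ttr (tpow A k)

/-- Kleene star: entrywise max of A^0, ..., A^{n-1}. -/
noncomputable def tstar {n : ℕ} (A : TMat n) : TMat n :=
  fun i j => (Finset.range n).sup fun k => tpow A k i j

/-- Tropical product of a finite chain of matrices F 0 ⊗ F 1 ⊗ ⋯ ⊗ F (k-1). -/
noncomputable def tchain {n : ℕ} : (k : ℕ) → (Fin k → TMat n) → TMat n
  | 0, _ => tId n
  | k + 1, F => tmul (F 0) (tchain k fun t => F t.succ)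

/-- Tuples of k nonnegative integers with sum m. -/
def tuples (k m : ℕ) : Finset (Fin k → Fin (m + 1)) :=
  Finset.univ.filter fun f => (∑ t, (f t : ℕ)) = m

/-- Tuples of k integers from {0,1} with sum l. -/
def binTuples (k l : ℕ) : Finset (Fin k → Fin 2) :=
  Finset.univ.filter fun j => (∑ t, (j t : ℕ)) = l

/-- The objective f_M(x) = max_{i,j} m_{ij} x_j / x_i. -/
noncomputable def fobj {n : ℕ} (M : TMat n) (x : Fin n → ℝ≥0) : ℝ≥0 :=
  Finset.univ.sup fun p : Fin n × Fin n => M p.1 p.2 * x p.2 / x p.1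

/-- Spectral radius: λ = max_{k=1..n} (tr(A^k))^{1/k}. -/
noncomputable def specRad {n : ℕ} (A : TMat n) : ℝ≥0 :=
  (Finset.Icc 1 n).sup fun k => ttr (tpow A k) ^ ((1 : ℝ) / k)

/-- σ = max over k=1..n-1, m=1..n-k and tuples (i_1,…,i_k) with sum m of
    (tr(A^{i_1} C ⋯ A^{i_k} C))^{1/m}. -/
noncomputable def sigmaC {n : ℕ} (A C : TMat n) : ℝ≥0 :=
  (Finset.Icc 1 (n - 1)).sup fun k =>
    (Finset.Icc 1 (n - k)).sup fun m =>
      (tuples k m).sup fun f =>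
        ttr (tchain k fun t => tmul (tpow A (f t : ℕ)) C) ^ ((1 : ℝ) / m)

/-- r_{k,l,m} = max over tuples (i_1,…,i_k) with sum m and (j_1,…,j_k) ∈ {0,1}^k with
    sum l of tr(A^{i_1} B^{j_1} C^{1-j_1} ⋯ A^{i_k} B^{j_k} C^{1-j_k}). -/
noncomputable def rklm {n : ℕ} (A B C : TMat n) (k l m : ℕ) : ℝ≥0 :=
  (tuples k m).sup fun f =>
    (binTuples k l).sup fun j =>
      ttr (tchain k fun t =>
        tmul (tpow A (f t : ℕ)) (tmul (tpow B (j t : ℕ)) (tpow C (1 - (j t : ℕ)))))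

/-- G(s) = max_{k,m,l} r_{k,l,m}^{1/l} s^{-m/l}. -/
noncomputable def Gfun {n : ℕ} (A B C : TMat n) (s : ℝ≥0) : ℝ≥0 :=
  (Finset.Icc 1 (n - 1)).sup fun k =>
    (Finset.Icc 1 (n - k)).sup fun m =>
      (Finset.Icc 1 k).sup fun l =>
        rklm A B C k l m ^ ((1 : ℝ) / l) * s ^ (-(m : ℝ) / l)

/-- H(t) = max_{k,m,l} r_{k,l,m}^{1/m} t^{-l/m}. -/
noncomputable def Hfun {n : ℕ} (A B C : TMat n) (t : ℝ≥0) : ℝ≥0 :=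
  (Finset.Icc 1 (n - 1)).sup fun k =>
    (Finset.Icc 1 (n - k)).sup fun m =>
      (Finset.Icc 1 k).sup fun l =>
        rklm A B C k l m ^ ((1 : ℝ) / m) * t ^ (-(l : ℝ) / m)

/-- Unconstrained r_{k,m} = max over tuples (i_1,…,i_k) with sum m of
    tr(A^{i_1} B ⋯ A^{i_k} B). -/
noncomputable def rkm {n : ℕ} (A B : TMat n) (k m : ℕ) : ℝ≥0 :=
  (tuples k m).sup fun f => ttr (tchain k fun t => tmul (tpow A (f t : ℕ)) B)

/-- Unconstrained G(s) = max_{k,m} r_{k,m}^{1/k} s^{-m/k}. -/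
noncomputable def Gfun0 {n : ℕ} (A B : TMat n) (s : ℝ≥0) : ℝ≥0 :=
  (Finset.Icc 1 (n - 1)).sup fun k =>
    (Finset.Icc 1 (n - k)).sup fun m =>
      rkm A B k m ^ ((1 : ℝ) / k) * s ^ (-(m : ℝ) / k)

/-- Unconstrained H(t) = max_{k,m} r_{k,m}^{1/m} t^{-k/m}. -/
noncomputable def Hfun0 {n : ℕ} (A B : TMat n) (t : ℝ≥0) : ℝ≥0 :=
  (Finset.Icc 1 (n - 1)).sup fun k =>
    (Finset.Icc 1 (n - k)).sup fun m =>
      rkm A B k m ^ ((1 : ℝ) / m) * t ^ (-(k : ℝ) / m)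

/-- Pareto-minimal points of a set V ⊆ ℝ≥0 × ℝ≥0. -/
def ParetoMin (V : Set (ℝ≥0 × ℝ≥0)) (p : ℝ≥0 × ℝ≥0) : Prop :=
  p ∈ V ∧ ¬∃ q ∈ V, q.1 ≤ p.1 ∧ q.2 ≤ p.2 ∧ q ≠ p

/-- The set of objective values over positive vectors of the unconstrained problem. -/
def V0 {n : ℕ} (A B : TMat n) : Set (ℝ≥0 × ℝ≥0) :=
  {p | ∃ x : Fin n → ℝ≥0, (∀ i, 0 < x i) ∧ p = (fobj A x, fobj B x)}

/-!
Any positive `x` is a subeigenvector, `A ⊗ x ≤ f_A(x) x` and `B ⊗ x ≤ f_B(x) x`; chaining these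
inequalities around cycles gives `λ ≤ f_A(x)` and `r_{k,m} ≤ f_A(x)^m f_B(x)^k`, that is
`G(f_A(x)) ≤ f_B(x)`. Conversely, for `λ ≤ α ≤ H(μ)` and `β = G(α)` (which is `≥ μ`) every cycle of
`D = α⁻¹A ⊕ β⁻¹B` has weight at most one: expand it into a word in `A` and `B`, and rotate a mixed
word into blocks `A^i ⊗ B`. Hence `D ⊗ D* ≤ D*`, and `x = D* ⊗ u` is a common subeigenvector with
`f_A(x) ≤ α`, `f_B(x) ≤ β`. As `G` decreases strictly on `[λ, H(μ)]` and `G(H(μ)) ≤ μ`, these two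
facts pin the Pareto front of `V` to the graph of `G` over `[λ, H(μ)]`.
-/

open Finset

section TropicalAlgebra
variable {n : ℕ}

lemma tmul_le_iff {A B : TMat n} {i j : Fin n} {c : ℝ≥0} :
    tmul A B i j ≤ c ↔ ∀ k, A i k * B k j ≤ c := by
  simp [tmul, Finset.sup_le_iff]

lemma le_tmul (A B : TMat n) (i k j : Fin n) : A i k * B k j ≤ tmul A B i j :=
  Finset.le_sup (f := fun k => A i k * B k j) (mem_univ k)

lemma tmul_assoc (A B C : TMat n) : tmul (tmul A B) C = tmul A (tmul B C) := by
  funext i j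
  simp only [tmul, NNReal.finset_sup_mul, NNReal.mul_finset_sup, mul_assoc]
  exact Finset.sup_comm _ _ _

lemma tId_tmul (A : TMat n) : tmul (tId n) A = A := by
  funext i j
  refine le_antisymm (tmul_le_iff.2 fun k => ?_) ?_
  · by_cases h : i = k <;> simp [tId, h]
  · simpa [tId] using le_tmul (tId n) A i i j

lemma tpow_add (D : TMat n) (a b : ℕ) : tpow D (a + b) = tmul (tpow D a) (tpow D b) := by
  induction a with
  | zero => rw [zero_add, tpow, tId_tmul]
  | succ a ih => rw [Nat.add_right_comm, tpow, tpow, ih, tmul_assoc]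

lemma le_ttr (A : TMat n) (i : Fin n) : A i i ≤ ttr A :=
  Finset.le_sup (f := fun i => A i i) (mem_univ i)

lemma ttr_le_iff {A : TMat n} {c : ℝ≥0} : ttr A ≤ c ↔ ∀ i, A i i ≤ c := by
  simp [ttr, Finset.sup_le_iff]

lemma ttr_tmul_comm (A B : TMat n) : ttr (tmul A B) = ttr (tmul B A) := by
  simp only [ttr, tmul, mul_comm (A _ _)]
  exact Finset.sup_comm _ _ _

lemma tsmul_tmul (c : ℝ≥0) (A B : TMat n) : tmul (tsmul c A) B = tsmul c (tmul A B) := by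
  funext i j
  simp only [tmul, tsmul, NNReal.mul_finset_sup, mul_assoc]

lemma tmul_tsmul (c : ℝ≥0) (A B : TMat n) : tmul A (tsmul c B) = tsmul c (tmul A B) := by
  funext i j
  simp only [tmul, tsmul, NNReal.mul_finset_sup, mul_left_comm]

lemma tsmul_tsmul (c d : ℝ≥0) (A : TMat n) : tsmul c (tsmul d A) = tsmul (c * d) A := by
  funext i j
  simp only [tsmul, mul_assoc]

lemma ttr_tsmul (c : ℝ≥0) (A : TMat n) : ttr (tsmul c A) = c * ttr A := by
  simp only [ttr, tsmul, NNReal.mul_finset_sup]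

end TropicalAlgebra

section SpectralRadius
variable {n : ℕ}

lemma specRad_le_iff {A : TMat n} {a : ℝ≥0} :
    specRad A ≤ a ↔ ∀ k ∈ Icc 1 n, ttr (tpow A k) ≤ a ^ k := by
  simp only [specRad, Finset.sup_le_iff]
  refine forall₂_congr fun k hk => ?_
  have hk : (0 : ℝ) < k := by exact_mod_cast (mem_Icc.1 hk).1
  rw [one_div, NNReal.rpow_inv_le_iff hk, NNReal.rpow_natCast]

lemma ttr_tpow_le_one {D : TMat n} (hD : specRad D ≤ 1) {k : ℕ} (hk : k ∈ Icc 1 n) :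
    ttr (tpow D k) ≤ 1 := by
  simpa using specRad_le_iff.1 hD k hk

end SpectralRadius

section Subeigenvectors
variable {n : ℕ} {x : Fin n → ℝ≥0}

/-- `M ⊗ x ≤ c x` in max-times arithmetic. -/
def IsSubeigenvector (M : TMat n) (c : ℝ≥0) (x : Fin n → ℝ≥0) : Prop :=
  ∀ i j, M i j * x j ≤ c * x i

lemma fobj_le_iff {M : TMat n} {c : ℝ≥0} (hx : ∀ i, 0 < x i) :
    fobj M x ≤ c ↔ IsSubeigenvector M c x := by
  simp only [fobj, Finset.sup_le_iff, mem_univ, true_implies, Prod.forall,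
    div_le_iff₀ (hx _), IsSubeigenvector]

lemma isSubeigenvector_fobj (M : TMat n) (hx : ∀ i, 0 < x i) :
    IsSubeigenvector M (fobj M x) x :=
  (fobj_le_iff hx).1 le_rfl

lemma isSubeigenvector_tId : IsSubeigenvector (tId n) 1 x := by
  intro i j
  by_cases h : i = j <;> simp [tId, h]

namespace IsSubeigenvector

variable {M N : TMat n} {c d : ℝ≥0}

lemma tmul (hM : IsSubeigenvector M c x) (hN : IsSubeigenvector N d x) :
    IsSubeigenvector (_root_.tmul M N) (c * d) x := by
  intro i j
  rw [_root_.tmul, NNReal.finset_sup_mul]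
  refine Finset.sup_le fun k _ => ?_
  calc M i k * N k j * x j = M i k * (N k j * x j) := mul_assoc _ _ _
    _ ≤ M i k * (d * x k) := mul_le_mul_right (hN k j) _
    _ = d * (M i k * x k) := by ring
    _ ≤ d * (c * x i) := mul_le_mul_right (hM i k) _
    _ = c * d * x i := by ring

lemma tpow (hM : IsSubeigenvector M c x) (k : ℕ) :
    IsSubeigenvector (_root_.tpow M k) (c ^ k) x := by
  induction k with
  | zero => exact isSubeigenvector_tId
  | succ k ih => rw [pow_succ', _root_.tpow]; exact hM.tmul ih

lemma ttr_le (hM : IsSubeigenvector M c x) (hx : ∀ i, 0 < x i) : ttr M ≤ c :=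
  ttr_le_iff.2 fun i => le_of_mul_le_mul_right (hM i i) (hx i)

lemma mono (hM : IsSubeigenvector M c x) (hNM : ∀ i j, N i j ≤ M i j) :
    IsSubeigenvector N c x :=
  fun i j => (mul_le_mul_left (hNM i j) _).trans (hM i j)

end IsSubeigenvector

lemma isSubeigenvector_tsmul_inv_iff {M : TMat n} {c : ℝ≥0} (hc : c ≠ 0) :
    IsSubeigenvector (tsmul c⁻¹ M) 1 x ↔ IsSubeigenvector M c x := by
  simp only [IsSubeigenvector, tsmul, one_mul, mul_assoc, inv_mul_le_iff₀ (pos_iff_ne_zero.2 hc)]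

lemma specRad_le_fobj (M : TMat n) (hx : ∀ i, 0 < x i) : specRad M ≤ fobj M x :=
  specRad_le_iff.2 fun k _ => ((isSubeigenvector_fobj M hx).tpow k).ttr_le hx

end Subeigenvectors

section KleeneStar
variable {n : ℕ} (D : TMat n)

lemma prod_path_le_tpow (v : ℕ → Fin n) (s N : ℕ) :
    ∏ t ∈ range N, D (v (s + t)) (v (s + t + 1)) ≤ tpow D N (v s) (v (s + N)) := by
  induction N generalizing s with
  | zero => simp [tpow, tId]
  | succ N ih =>
    rw [prod_range_succ', mul_comm, add_zero]
    calc D (v s) (v (s + 1)) * ∏ t ∈ range N, D (v (s + (t + 1))) (v (s + (t + 1) + 1))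
        ≤ D (v s) (v (s + 1)) * tpow D N (v (s + 1)) (v (s + 1 + N)) := by
          gcongr
          simpa only [add_assoc, add_comm 1] using ih (s + 1)
      _ ≤ tpow D (N + 1) (v s) (v (s + (N + 1))) := by
          rw [add_assoc, add_comm 1 N]
          exact le_tmul D (tpow D N) _ _ _

lemma exists_path_of_tpow_ne_zero {N : ℕ} {i j : Fin n} (h : tpow D N i j ≠ 0) :
    ∃ v : ℕ → Fin n, v 0 = i ∧ v N = j ∧
      tpow D N i j ≤ ∏ t ∈ range N, D (v t) (v (t + 1)) := by
  induction N generalizing i with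
  | zero =>
    obtain rfl : i = j := by by_contra hij; simp [tpow, tId, hij] at h
    exact ⟨fun _ => i, rfl, rfl, by simp [tpow, tId]⟩
  | succ N ih =>
    obtain ⟨q, -, hq⟩ := exists_mem_eq_sup univ ⟨i, mem_univ i⟩
      fun q => D i q * tpow D N q j
    change tpow D (N + 1) i j = _ at hq
    rw [hq] at h ⊢
    obtain ⟨v, rfl, hvN, hv⟩ := ih (right_ne_zero_of_mul h)
    refine ⟨fun t => Nat.casesOn t i v, rfl, hvN, ?_⟩
    rw [prod_range_succ', mul_comm (D i (v 0))]
    exact mul_le_mul' hv le_rfl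

lemma le_tstar {k : ℕ} (hk : k < n) (i j : Fin n) : tpow D k i j ≤ tstar D i j :=
  Finset.le_sup (f := fun k => tpow D k i j) (mem_range.2 hk)

lemma exists_lt_le_apply_eq (v : ℕ → Fin n) : ∃ a b, a < b ∧ b ≤ n ∧ v a = v b := by
  obtain ⟨a, b, hab, h⟩ := Fintype.exists_ne_map_eq_of_card_lt (fun t : Fin (n + 1) => v t)
    (by simp)
  rcases lt_or_gt_of_ne (Fin.val_ne_of_ne hab) with hlt | hlt
  · exact ⟨a, b, hlt, Nat.lt_succ_iff.1 b.2, h⟩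
  · exact ⟨b, a, hlt, Nat.lt_succ_iff.1 a.2, h.symm⟩

/-- Cycle removal: a walk of length `N ≥ n` repeats a vertex, and the closed subwalk between the
two visits has weight at most one. -/
lemma tpow_le_tstar (hD : specRad D ≤ 1) (N : ℕ) (i j : Fin n) :
    tpow D N i j ≤ tstar D i j := by
  induction N using Nat.strong_induction_on generalizing i j with
  | _ N ih =>
  rcases lt_or_ge N n with hN | hN
  · exact le_tstar D hN i j
  rcases eq_or_ne (tpow D N i j) 0 with h0 | h0
  · simp [h0]
  obtain ⟨v, rfl, rfl, hv⟩ := exists_path_of_tpow_ne_zero D h0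
  obtain ⟨a, b, hab, hbn, hvab⟩ := exists_lt_le_apply_eq v
  obtain ⟨c, r, rfl, hN⟩ : ∃ c r, b = a + c ∧ N = a + (c + r) := ⟨b - a, N - b, by omega, by omega⟩
  have hcycle : tpow D c (v a) (v a) ≤ 1 :=
    (le_ttr _ _).trans (ttr_tpow_le_one hD (mem_Icc.2 ⟨by omega, by omega⟩))
  calc tpow D N (v 0) (v N) ≤ ∏ t ∈ range N, D (v t) (v (t + 1)) := hv
    _ = (∏ t ∈ range a, D (v (0 + t)) (v (0 + t + 1))) *
          ((∏ t ∈ range c, D (v (a + t)) (v (a + t + 1))) *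
            ∏ t ∈ range r, D (v (a + c + t)) (v (a + c + t + 1))) := by
        rw [hN, prod_range_add, prod_range_add]
        simp only [zero_add, add_assoc]
    _ ≤ tpow D a (v 0) (v (0 + a)) *
          (tpow D c (v a) (v (a + c)) * tpow D r (v (a + c)) (v (a + c + r))) := by
        gcongr <;> exact prod_path_le_tpow D v _ _
    _ ≤ tpow D a (v 0) (v a) * tpow D r (v a) (v N) := by
        rw [zero_add, ← hvab, hN, ← add_assoc]
        gcongr; exact mul_le_of_le_one_left' hcycle
    _ ≤ tpow D (a + r) (v 0) (v N) := tpow_add D a r ▸ le_tmul _ _ _ _ _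
    _ ≤ tstar D (v 0) (v N) := ih (a + r) (by omega) _ _

lemma mul_tstar_le (hD : specRad D ≤ 1) (i j p : Fin n) :
    D i j * tstar D j p ≤ tstar D i p := by
  rw [tstar, NNReal.mul_finset_sup]
  exact Finset.sup_le fun k _ => (le_tmul D (tpow D k) i j p).trans (tpow_le_tstar D hD (k + 1) i p)

lemma tmulVec_tstar_pos {u : Fin n → ℝ≥0} (hu : ∀ i, 0 < u i) (i : Fin n) :
    0 < tmulVec (tstar D) u i := by
  have h1 : 1 ≤ tstar D i i := by simpa [tpow, tId] using le_tstar D i.pos i i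
  calc 0 < u i := hu i
    _ ≤ tstar D i i * u i := le_mul_of_one_le_left' h1
    _ ≤ tmulVec (tstar D) u i := Finset.le_sup (f := fun p => tstar D i p * u p) (mem_univ i)

lemma isSubeigenvector_tmulVec_tstar (hD : specRad D ≤ 1)
    (u : Fin n → ℝ≥0) : IsSubeigenvector D 1 (tmulVec (tstar D) u) := by
  intro i j
  rw [one_mul, tmulVec, NNReal.mul_finset_sup]
  refine Finset.sup_le fun p _ => ?_
  rw [← mul_assoc]
  exact (mul_le_mul_left (mul_tstar_le D hD i j p) _).trans
    (Finset.le_sup (f := fun p => tstar D i p * u p) (mem_univ p))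

end KleeneStar

section Words
variable {n : ℕ}

noncomputable def tlistProd : List (TMat n) → TMat n
  | [] => tId n
  | M :: L => tmul M (tlistProd L)

lemma tlistProd_append (L₁ L₂ : List (TMat n)) :
    tlistProd (L₁ ++ L₂) = tmul (tlistProd L₁) (tlistProd L₂) := by
  induction L₁ with
  | nil => exact (tId_tmul _).symm
  | cons M L ih => rw [List.cons_append, tlistProd, tlistProd, ih, tmul_assoc]

lemma ttr_tlistProd_append_comm (L₁ L₂ : List (TMat n)) :
    ttr (tlistProd (L₁ ++ L₂)) = ttr (tlistProd (L₂ ++ L₁)) := by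
  rw [tlistProd_append, tlistProd_append, ttr_tmul_comm]

lemma tchain_eq_tlistProd (k : ℕ) (F : Fin k → TMat n) : tchain k F = tlistProd (List.ofFn F) := by
  induction k with
  | zero => rfl
  | succ k ih => rw [List.ofFn_succ, tchain, ih]; rfl

lemma tpow_eq_tlistProd_replicate (A : TMat n) (k : ℕ) :
    tpow A k = tlistProd (List.replicate k A) := by
  induction k with
  | zero => rfl
  | succ k ih => rw [tpow, ih]; rfl

noncomputable def wordMat (P Q : TMat n) (w : List Bool) : TMat n :=
  tlistProd (w.map fun b => cond b Q P)

lemma wordMat_cons (P Q : TMat n) (b : Bool) (w : List Bool) :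
    wordMat P Q (b :: w) = tmul (cond b Q P) (wordMat P Q w) := rfl

lemma wordMat_replicate_false (P Q : TMat n) (k : ℕ) :
    wordMat P Q (List.replicate k false) = tpow P k := by
  rw [wordMat, List.map_replicate, tpow_eq_tlistProd_replicate]; rfl

lemma wordMat_replicate_true (P Q : TMat n) (k : ℕ) :
    wordMat P Q (List.replicate k true) = tpow Q k := by
  rw [wordMat, List.map_replicate, tpow_eq_tlistProd_replicate]; rfl

lemma wordMat_tsmul (P Q : TMat n) (a b : ℝ≥0) (w : List Bool) :
    wordMat (tsmul a P) (tsmul b Q) w =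
      tsmul (a ^ w.count false * b ^ w.count true) (wordMat P Q w) := by
  induction w with
  | nil => funext i j; simp [wordMat, tlistProd, tsmul]
  | cons c w ih =>
    rw [wordMat_cons, wordMat_cons, ih, tmul_tsmul]
    cases c <;> simp only [cond, tsmul_tmul, tsmul_tsmul, List.count_cons] <;> congr 1 <;>
      simp [pow_succ] <;> ring

lemma exists_tpow_tadd_le_wordMat (P Q : TMat n) (k : ℕ) (i j : Fin n) :
    ∃ w : List Bool, w.length = k ∧ tpow (tadd P Q) k i j ≤ wordMat P Q w i j := by
  induction k generalizing i with
  | zero => exact ⟨[], rfl, le_rfl⟩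
  | succ k ih =>
    obtain ⟨p, -, hp⟩ := exists_mem_eq_sup univ ⟨i, mem_univ i⟩
      fun p => tadd P Q i p * tpow (tadd P Q) k p j
    obtain ⟨w, hw, hle⟩ := ih p
    obtain ⟨b, hb⟩ : ∃ b : Bool, tadd P Q i p = cond b Q P i p := by
      rcases le_total (P i p) (Q i p) with h | h
      · exact ⟨true, sup_eq_right.2 h⟩
      · exact ⟨false, sup_eq_left.2 h⟩
    refine ⟨b :: w, by rw [List.length_cons, hw], ?_⟩
    change tpow (tadd P Q) (k + 1) i j = _ at hp
    rw [hp, hb]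
    exact (mul_le_mul_right hle _).trans (le_tmul _ _ i p j)

end Words

section Blocks
variable {n : ℕ} (A B : TMat n)

noncomputable def powBlock (i : ℕ) : TMat n := tmul (tpow A i) B

lemma exists_wordMat_append_true_eq (y : List Bool) :
    ∃ g : List ℕ, g.length = y.count true + 1 ∧ g.sum = y.count false ∧
      wordMat A B (y ++ [true]) = tlistProd (g.map (powBlock A B)) := by
  induction y with
  | nil => exact ⟨[0], rfl, rfl, by simp [wordMat, tlistProd, powBlock, tpow, tId_tmul]⟩
  | cons b y ih =>
    obtain ⟨g, hlen, hsum, hg⟩ := ih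
    cases b with
    | true =>
      refine ⟨0 :: g, by simp [hlen], by simp [hsum], ?_⟩
      simp only [List.cons_append, wordMat_cons, hg, List.map_cons, tlistProd, powBlock, tpow,
        tId_tmul, cond]
    | false =>
      obtain ⟨h, t, rfl⟩ := List.exists_cons_of_length_eq_add_one hlen
      refine ⟨(h + 1) :: t, by simpa using hlen, by simp [← hsum]; ring, ?_⟩
      simp only [List.cons_append, wordMat_cons, hg, List.map_cons, tlistProd, powBlock, tpow,
        tmul_assoc, cond]

lemma ttr_tlistProd_powBlock_le_rkm (g : List ℕ) :
    ttr (tlistProd (g.map (powBlock A B))) ≤ rkm A B g.length g.sum := by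
  let f : Fin g.length → Fin (g.sum + 1) :=
    fun t => ⟨g.get t, Nat.lt_succ_of_le (List.le_sum_of_mem (List.get_mem g t))⟩
  have hf : f ∈ tuples g.length g.sum := by
    simp only [tuples, mem_filter, mem_univ, true_and, f, ← List.sum_ofFn, List.ofFn_get]
  refine le_trans (le_of_eq ?_) (Finset.le_sup (f := fun f : Fin g.length → Fin (g.sum + 1) =>
    ttr (tchain g.length fun t => tmul (tpow A (f t : ℕ)) B)) hf)
  rw [tchain_eq_tlistProd]
  conv_lhs => rw [← List.ofFn_get g, List.map_ofFn]
  rfl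

lemma ttr_wordMat_le_rkm {w : List Bool} (hw : true ∈ w) :
    ttr (wordMat A B w) ≤ rkm A B (w.count true) (w.count false) := by
  obtain ⟨u, v, rfl⟩ := List.append_of_mem hw
  obtain ⟨g, hlen, hsum, hg⟩ := exists_wordMat_append_true_eq A B (v ++ u)
  have hrot : ttr (wordMat A B (u ++ true :: v)) = ttr (wordMat A B (v ++ u ++ [true])) := by
    simp only [wordMat, List.map_append, List.map_cons, List.map_nil, List.append_assoc]
    rw [← List.singleton_append, ← List.append_assoc, ttr_tlistProd_append_comm]
  rw [hrot, hg]
  convert ttr_tlistProd_powBlock_le_rkm A B g using 2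
  · simp [hlen, List.count_append]; omega
  · simp [hsum, List.count_append]; omega

end Blocks

section RootDiv

/-- The positive solution `y` of `y^k s^m = r`. -/
noncomputable def rootDiv (r s : ℝ≥0) (k m : ℕ) : ℝ≥0 := r ^ ((1 : ℝ) / k) * s ^ (-(m : ℝ) / k)

lemma rootDiv_eq (r s : ℝ≥0) (k m : ℕ) : rootDiv r s k m = (r / s ^ m) ^ ((k : ℝ)⁻¹) := by
  rw [rootDiv, NNReal.div_rpow, ← NNReal.rpow_natCast, ← NNReal.rpow_mul, neg_div,
    NNReal.rpow_neg, one_div]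
  simp only [div_eq_mul_inv]

variable {r s b : ℝ≥0} {k m : ℕ}

lemma rootDiv_le_iff (hk : k ≠ 0) (hs : s ≠ 0) : rootDiv r s k m ≤ b ↔ r ≤ b ^ k * s ^ m := by
  rw [rootDiv_eq, NNReal.rpow_inv_le_iff (by positivity), NNReal.rpow_natCast,
    div_le_iff₀ (by positivity)]

lemma le_rootDiv_iff (hk : k ≠ 0) (hs : s ≠ 0) : b ≤ rootDiv r s k m ↔ b ^ k * s ^ m ≤ r := by
  rw [rootDiv_eq, NNReal.le_rpow_inv_iff (by positivity), NNReal.rpow_natCast,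
    le_div_iff₀ (by positivity)]

lemma rootDiv_zero_left (hk : k ≠ 0) : rootDiv 0 s k m = 0 := by
  rw [rootDiv, NNReal.zero_rpow (by positivity), zero_mul]

lemma rootDiv_lt_rootDiv {a : ℝ≥0} (hr : r ≠ 0) (hk : k ≠ 0) (hm : m ≠ 0) (ha : 0 < a)
    (hab : a < b) : rootDiv r b k m < rootDiv r a k m := by
  rw [rootDiv_eq, rootDiv_eq]
  gcongr

end RootDiv

section FrontFunctions
variable {n : ℕ} {A B : TMat n}

def mixedLengths (n : ℕ) : Finset (Σ _ : ℕ, ℕ) :=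
  (Icc 1 (n - 1)).sigma fun k => Icc 1 (n - k)

lemma mem_mixedLengths {p : Σ _ : ℕ, ℕ} :
    p ∈ mixedLengths n ↔ 1 ≤ p.1 ∧ 1 ≤ p.2 ∧ p.1 + p.2 ≤ n := by
  simp only [mixedLengths, mem_sigma, mem_Icc]
  omega

lemma ne_zero_of_mem_mixedLengths {p : Σ _ : ℕ, ℕ} (hp : p ∈ mixedLengths n) :
    p.1 ≠ 0 ∧ p.2 ≠ 0 := by
  have := mem_mixedLengths.1 hp
  omega

lemma Gfun0_eq_sup (A B : TMat n) (s : ℝ≥0) :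
    Gfun0 A B s = (mixedLengths n).sup fun p => rootDiv (rkm A B p.1 p.2) s p.1 p.2 := by
  rw [Gfun0, mixedLengths, sup_sigma]; rfl

lemma Hfun0_eq_sup (A B : TMat n) (t : ℝ≥0) :
    Hfun0 A B t = (mixedLengths n).sup fun p => rootDiv (rkm A B p.1 p.2) t p.2 p.1 := by
  rw [Hfun0, mixedLengths, sup_sigma]; rfl

lemma Gfun0_le_iff {s b : ℝ≥0} (hs : s ≠ 0) :
    Gfun0 A B s ≤ b ↔ ∀ p ∈ mixedLengths n, rkm A B p.1 p.2 ≤ b ^ p.1 * s ^ p.2 := by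
  rw [Gfun0_eq_sup, Finset.sup_le_iff]
  exact forall₂_congr fun p hp => rootDiv_le_iff (ne_zero_of_mem_mixedLengths hp).1 hs

lemma le_Gfun0_of_le_Hfun0 {s α : ℝ≥0} (hs : s ≠ 0) (hα : α ≠ 0) (h : α ≤ Hfun0 A B s) :
    s ≤ Gfun0 A B α := by
  rw [Hfun0_eq_sup, Finset.le_sup_iff (pos_iff_ne_zero.2 hα)] at h
  obtain ⟨p, hp, hαp⟩ := h
  obtain ⟨hk, hm⟩ := ne_zero_of_mem_mixedLengths hp
  rw [le_rootDiv_iff hm hs, mul_comm] at hαp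
  rw [Gfun0_eq_sup]
  exact ((le_rootDiv_iff hk hα).2 hαp).trans
    (Finset.le_sup (f := fun p : Σ _ : ℕ, ℕ => rootDiv (rkm A B p.1 p.2) α p.1 p.2) hp)

lemma Gfun0_Hfun0_le {s : ℝ≥0} (hs : s ≠ 0) (hH : Hfun0 A B s ≠ 0) :
    Gfun0 A B (Hfun0 A B s) ≤ s := by
  refine (Gfun0_le_iff hH).2 fun p hp => ?_
  have hle : rootDiv (rkm A B p.1 p.2) s p.2 p.1 ≤ Hfun0 A B s := by
    rw [Hfun0_eq_sup]
    exact Finset.le_sup (f := fun p : Σ _ : ℕ, ℕ => rootDiv (rkm A B p.1 p.2) s p.2 p.1) hp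
  rw [mul_comm]
  exact (rootDiv_le_iff (ne_zero_of_mem_mixedLengths hp).2 hs).1 hle

lemma Gfun0_lt_of_lt {a b : ℝ≥0} (ha : 0 < a) (hab : a < b) (hG : 0 < Gfun0 A B b) :
    Gfun0 A B b < Gfun0 A B a := by
  simp only [Gfun0_eq_sup] at hG ⊢
  obtain ⟨q, hq, -⟩ := Finset.lt_sup_iff.1 hG
  obtain ⟨p, hp, hpG⟩ := exists_mem_eq_sup (mixedLengths n) ⟨q, hq⟩
    fun p : Σ _ : ℕ, ℕ => rootDiv (rkm A B p.1 p.2) b p.1 p.2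
  obtain ⟨hk, hm⟩ := ne_zero_of_mem_mixedLengths hp
  have hr : rkm A B p.1 p.2 ≠ 0 := by
    rintro h; rw [hpG, h, rootDiv_zero_left hk] at hG; exact hG.false
  rw [hpG]
  exact (rootDiv_lt_rootDiv hr hk hm ha hab).trans_le
    (Finset.le_sup (f := fun p : Σ _ : ℕ, ℕ => rootDiv (rkm A B p.1 p.2) a p.1 p.2) hp)

/-- On `[a₀, H(s)]` the function `G` stays above `s`, hence positive, so it decreases strictly. -/
lemma Gfun0_strictAntiOn {s a₀ : ℝ≥0} (hs : s ≠ 0) (ha₀ : a₀ ≠ 0) :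
    StrictAntiOn (Gfun0 A B) (Set.Icc a₀ (Hfun0 A B s)) := by
  intro a ha b hb hab
  have hb₀ : b ≠ 0 := ((pos_iff_ne_zero.2 ha₀).trans_le ha.1 |>.trans hab).ne'
  exact Gfun0_lt_of_lt ((pos_iff_ne_zero.2 ha₀).trans_le ha.1) hab
    ((pos_iff_ne_zero.2 hs).trans_le (le_Gfun0_of_le_Hfun0 hs hb₀ hb.2))

end FrontFunctions

section CycleBounds
variable {n : ℕ} {A B : TMat n}

lemma IsSubeigenvector.tlistProd_powBlock {x : Fin n → ℝ≥0} {a b : ℝ≥0}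
    (hA : IsSubeigenvector A a x) (hB : IsSubeigenvector B b x) (g : List ℕ) :
    IsSubeigenvector (tlistProd (g.map (powBlock A B))) (a ^ g.sum * b ^ g.length) x := by
  induction g with
  | nil =>
    simp only [List.map_nil, List.sum_nil, List.length_nil, pow_zero, mul_one]
    exact isSubeigenvector_tId
  | cons h t ih =>
    have := ((hA.tpow h).tmul hB).tmul ih
    rwa [show a ^ h * b * (a ^ t.sum * b ^ t.length) = a ^ (h :: t).sum * b ^ (h :: t).length by
      simp only [List.sum_cons, List.length_cons, pow_add, pow_succ]; ring] at this

lemma rkm_le_of_isSubeigenvector {x : Fin n → ℝ≥0} {a b : ℝ≥0} (hx : ∀ i, 0 < x i)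
    (hA : IsSubeigenvector A a x) (hB : IsSubeigenvector B b x) (k m : ℕ) :
    rkm A B k m ≤ a ^ m * b ^ k := by
  refine Finset.sup_le fun f hf => ?_
  have hsum : (∑ t, (f t : ℕ)) = m := (mem_filter.1 hf).2
  have := (hA.tlistProd_powBlock hB (List.ofFn fun t => (f t : ℕ))).ttr_le hx
  rwa [List.sum_ofFn, hsum, List.length_ofFn, List.map_ofFn, ← tchain_eq_tlistProd] at this

lemma Gfun0_fobj_le {x : Fin n → ℝ≥0} (hx : ∀ i, 0 < x i) (h : fobj A x ≠ 0) :
    Gfun0 A B (fobj A x) ≤ fobj B x :=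
  (Gfun0_le_iff h).2 fun _ _ => (rkm_le_of_isSubeigenvector hx (isSubeigenvector_fobj A hx)
    (isSubeigenvector_fobj B hx) _ _).trans_eq (mul_comm _ _)

variable {α β : ℝ≥0}

lemma ttr_wordMat_le (hA : specRad A ≤ α) (hB : specRad B ≤ β)
    (hAB : ∀ p ∈ mixedLengths n, rkm A B p.1 p.2 ≤ β ^ p.1 * α ^ p.2) {w : List Bool}
    (hw : w.length ∈ Icc 1 n) : ttr (wordMat A B w) ≤ α ^ w.count false * β ^ w.count true := by
  by_cases ht : true ∈ w
  · by_cases hf : false ∈ w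
    · have hlen := List.count_true_add_count_false w
      have ht' := List.count_pos_iff.2 ht
      have hf' := List.count_pos_iff.2 hf
      rw [mem_Icc] at hw
      rw [mul_comm]
      exact (ttr_wordMat_le_rkm A B ht).trans
        (hAB ⟨_, _⟩ (mem_mixedLengths.2 ⟨ht', hf', show w.count true + w.count false ≤ n by omega⟩))
    · rw [List.eq_replicate_of_mem (l := w) (a := true) fun b hb => by cases b <;> simp_all,
        wordMat_replicate_true]
      simpa [List.count_replicate] using specRad_le_iff.1 hB _ hw
  · rw [List.eq_replicate_of_mem (l := w) (a := false) fun b hb => by cases b <;> simp_all,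
      wordMat_replicate_false]
    simpa [List.count_replicate] using specRad_le_iff.1 hA _ hw

lemma specRad_tadd_tsmul_inv_le_one (hα : α ≠ 0) (hβ : β ≠ 0) (hA : specRad A ≤ α)
    (hB : specRad B ≤ β) (hAB : ∀ p ∈ mixedLengths n, rkm A B p.1 p.2 ≤ β ^ p.1 * α ^ p.2) :
    specRad (tadd (tsmul α⁻¹ A) (tsmul β⁻¹ B)) ≤ 1 := by
  refine specRad_le_iff.2 fun c hc => ttr_le_iff.2 fun i => ?_
  obtain ⟨w, rfl, hle⟩ := exists_tpow_tadd_le_wordMat (tsmul α⁻¹ A) (tsmul β⁻¹ B) c i i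
  calc tpow _ w.length i i ≤ ttr (wordMat (tsmul α⁻¹ A) (tsmul β⁻¹ B) w) :=
        hle.trans (le_ttr _ i)
    _ = α⁻¹ ^ w.count false * β⁻¹ ^ w.count true * ttr (wordMat A B w) := by
        rw [wordMat_tsmul, ttr_tsmul]
    _ ≤ α⁻¹ ^ w.count false * β⁻¹ ^ w.count true * (α ^ w.count false * β ^ w.count true) := by
        gcongr; exact ttr_wordMat_le hA hB hAB hc
    _ = 1 ^ w.length := by
        rw [mul_mul_mul_comm, ← mul_pow, ← mul_pow, inv_mul_cancel₀ hα, inv_mul_cancel₀ hβ,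
          one_pow, one_pow, one_pow, one_mul]

lemma fobj_tmulVec_tstar_le (hα : α ≠ 0) (hβ : β ≠ 0) (hA : specRad A ≤ α)
    (hB : specRad B ≤ β) (hAB : ∀ p ∈ mixedLengths n, rkm A B p.1 p.2 ≤ β ^ p.1 * α ^ p.2)
    {u : Fin n → ℝ≥0} (hu : ∀ i, 0 < u i) :
    fobj A (tmulVec (tstar (tadd (tsmul α⁻¹ A) (tsmul β⁻¹ B))) u) ≤ α ∧
      fobj B (tmulVec (tstar (tadd (tsmul α⁻¹ A) (tsmul β⁻¹ B))) u) ≤ β := by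
  have hx := tmulVec_tstar_pos (tadd (tsmul α⁻¹ A) (tsmul β⁻¹ B)) hu
  have hD := isSubeigenvector_tmulVec_tstar _ (specRad_tadd_tsmul_inv_le_one hα hβ hA hB hAB) u
  rw [fobj_le_iff hx, fobj_le_iff hx, ← isSubeigenvector_tsmul_inv_iff hα,
    ← isSubeigenvector_tsmul_inv_iff hβ]
  exact ⟨hD.mono fun _ _ => le_sup_left, hD.mono fun _ _ => le_sup_right⟩

lemma fobj_tmulVec_tstar_le_Gfun0 (hμ : specRad B ≠ 0) (hα : α ≠ 0) (h1 : specRad A ≤ α)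
    (h2 : α ≤ Hfun0 A B (specRad B)) {u : Fin n → ℝ≥0} (hu : ∀ i, 0 < u i) :
    fobj A (tmulVec (tstar (tadd (tsmul α⁻¹ A) (tsmul (Gfun0 A B α)⁻¹ B))) u) ≤ α ∧
      fobj B (tmulVec (tstar (tadd (tsmul α⁻¹ A) (tsmul (Gfun0 A B α)⁻¹ B))) u) ≤
        Gfun0 A B α := by
  have hμG := le_Gfun0_of_le_Hfun0 hμ hα h2
  exact fobj_tmulVec_tstar_le hα ((pos_iff_ne_zero.2 hμ).trans_le hμG).ne' h1 hμG
    ((Gfun0_le_iff hα).1 le_rfl) hu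

end CycleBounds

theorem paretoMin_eq_graph {V : Set (ℝ≥0 × ℝ≥0)} {g : ℝ≥0 → ℝ≥0} {a b : ℝ≥0} (hab : a ≤ b)
    (hV : ∀ p ∈ V, a ≤ p.1 ∧ g p.1 ≤ p.2 ∧ g b ≤ p.2) (hg : StrictAntiOn g (Set.Icc a b))
    (hreach : ∀ α ∈ Set.Icc a b, ∃ p ∈ V, p.1 ≤ α ∧ p.2 ≤ g α) :
    {p | ParetoMin V p} = {p | ∃ α, a ≤ α ∧ α ≤ b ∧ p = (α, g α)} := by
  have hbelow : ∀ α ∈ Set.Icc a b, ∀ q ∈ V, q.1 ≤ α → q.2 ≤ g α → q = (α, g α) := by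
    intro α hα q hq h1 h2
    obtain ⟨hq1, hq2, -⟩ := hV q hq
    have hq1' : q.1 = α := h1.eq_or_lt.resolve_right fun hlt =>
      (hg ⟨hq1, h1.trans hα.2⟩ hα hlt).not_ge (hq2.trans h2)
    exact Prod.ext hq1' (le_antisymm h2 (hq1' ▸ hq2))
  have hmem : ∀ α ∈ Set.Icc a b, (α, g α) ∈ V := fun α hα => by
    obtain ⟨q, hq, h1, h2⟩ := hreach α hα
    exact hbelow α hα q hq h1 h2 ▸ hq
  ext p
  constructor
  · rintro ⟨hp, hmin⟩
    obtain ⟨hp1, hp2, hpb⟩ := hV p hp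
    rcases le_or_gt p.1 b with h | h
    · exact ⟨p.1, hp1, h, (not_not.1 fun hne => hmin ⟨_, hmem _ ⟨hp1, h⟩, le_rfl, hp2, hne⟩).symm⟩
    · exact absurd ⟨_, hmem b ⟨hab, le_rfl⟩, h.le, hpb, fun heq => h.ne (congrArg Prod.fst heq)⟩
        hmin
  · rintro ⟨α, h1, h2, rfl⟩
    exact ⟨hmem α ⟨h1, h2⟩, fun ⟨q, hq, hq1, hq2, hne⟩ => hne (hbelow α ⟨h1, h2⟩ q hq hq1 hq2)⟩

/-- Unconstrained case with H(μ) > λ: the set of Pareto-minimal points of V is the segment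
{(α, G(α)) : λ ≤ α ≤ H(μ)}; moreover, for each such α, every vector
x = (α⁻¹A ⊕ G(α)⁻¹B)* ⊗ u with u positive satisfies f_A(x) ≤ α and f_B(x) ≤ G(α). -/
theorem stmt18 {n : ℕ} (A B : TMat n)
    (hlam : 0 < specRad A) (hmu : 0 < specRad B)
    (hH : specRad A < Hfun0 A B (specRad B)) :
    ({p | ParetoMin (V0 A B) p} =
      {p | ∃ α : ℝ≥0, specRad A ≤ α ∧ α ≤ Hfun0 A B (specRad B) ∧
        p = (α, Gfun0 A B α)}) ∧
    (∀ α : ℝ≥0, specRad A ≤ α → α ≤ Hfun0 A B (specRad B) →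
      ∀ u : Fin n → ℝ≥0, (∀ i, 0 < u i) →
        fobj A (tmulVec (tstar (tadd (tsmul α⁻¹ A) (tsmul (Gfun0 A B α)⁻¹ B))) u) ≤ α ∧
        fobj B (tmulVec (tstar (tadd (tsmul α⁻¹ A) (tsmul (Gfun0 A B α)⁻¹ B))) u) ≤
          Gfun0 A B α) := by
  refine ⟨paretoMin_eq_graph hH.le ?_ (Gfun0_strictAntiOn hmu.ne' hlam.ne') ?_,
    fun α h1 h2 u hu => fobj_tmulVec_tstar_le_Gfun0 hmu.ne' (hlam.trans_le h1).ne' h1 h2 hu⟩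
  · rintro _ ⟨x, hx, rfl⟩
    have hAx := specRad_le_fobj A hx
    exact ⟨hAx, Gfun0_fobj_le hx (hlam.trans_le hAx).ne',
      (Gfun0_Hfun0_le hmu.ne' (hlam.trans hH).ne').trans (specRad_le_fobj B hx)⟩
  · rintro α ⟨h1, h2⟩
    exact ⟨_, ⟨_, tmulVec_tstar_pos _ fun _ => one_pos, rfl⟩,
      fobj_tmulVec_tstar_le_Gfun0 hmu.ne' (hlam.trans_le h1).ne' h1 h2 fun _ => one_pos⟩
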